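/- arXiv:1702.00519 — 2 statements merged into one kernel-verified Lean document; each statement's English description precedes it below -/
import Mathlib

section
/- Let I be a shifted stable monomial ideal of degree 2 in K[x_1,...,x_n] that is a-determined. Then the a-dual \hat{I}^{[a]} has linear quotients; moreover, in the associated ordering, each colon ideal is generated by at most 2 variables. -/
open MvPolynomial Finsupp

/-- The monomial ideal of `K[x_1, x_2, …]` generated by the monomials with exponent
vectors in `S` (variables indexed by positive naturals). -/
noncomputable def monomialIdeal (K : Type*) [Field K] (S : Finset (ℕ →₀ ℕ)) :
    Ideal (MvPolynomial ℕ K) :=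
  Ideal.span ((fun s => (monomial s (1 : K))) '' S)

/-- Exponent vectors of the generators `x^a / f` of the `a`-dual. -/
noncomputable def dualGens (a : ℕ →₀ ℕ) (S : Finset (ℕ →₀ ℕ)) : Finset (ℕ →₀ ℕ) :=
  S.image (fun s => a - s)

/-- The shifted quasi-Ferrers diagram `{(i,j) : 1 ≤ i ≤ h, μ_i < j ≤ λ_i}` as a
finite set. -/
def quasiFerrersF (h : ℕ) (lam mu : ℕ → ℕ) : Finset (ℕ × ℕ) :=
  (Finset.Icc 1 h ×ˢ Finset.Icc 1 ((Finset.Icc 1 h).sup lam)).filter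
    (fun p => mu p.1 < p.2 ∧ p.2 ≤ lam p.1)

/-- A quasi-Borel move of geometric length 1 between two points of `D`. -/
def UnitStep (D : Finset (ℕ × ℕ)) (c c' : ℕ × ℕ) : Prop :=
  c ∈ D ∧ c' ∈ D ∧
    ((c.1 = c'.1 ∧ (c.2 + 1 = c'.2 ∨ c'.2 + 1 = c.2)) ∨
     (c.2 = c'.2 ∧ (c.1 + 1 = c'.1 ∨ c'.1 + 1 = c.1)))

/-- `D` is connected. -/
def DiagramConnected (D : Finset (ℕ × ℕ)) : Prop :=
  ∀ c ∈ D, ∀ c' ∈ D, Relation.ReflTransGen (UnitStep D) c c'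

/-! Since `I` is `a`-determined, the colon ideal of the dual generators `x^a / t` (`t` before `s`)
by `x^a / s` is generated by the monomials `s / gcd(s, t)`. For two distinct quadratic monomials
this is a single variable dividing `s` when they share a variable, and `s` itself otherwise. So if
every `s` shares a variable with an earlier `t`, the colon ideal is generated by variables dividing
`s`, at most two of them. Such an ordering exists because the diagram is connected: neighbouring
cells `(i, j)` share a row or a column, hence their monomials share a variable. -/

section ConnectedOrder

variable {α : Type*}

theorem Relation.ReflTransGen.exists_rel_of_not {r : α → α → Prop} {p : α → Prop} {x y : α}
    (h : Relation.ReflTransGen r x y) (hx : p x) (hy : ¬ p y) : ∃ u w, p u ∧ ¬ p w ∧ r u w := by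
  induction h with
  | refl => exact absurd hx hy
  | @tail b c _ hbc ih =>
    by_cases hb : p b
    · exact ⟨b, c, hb, hy, hbc⟩
    · exact ih hb

def IsConnectedOrder (r : α → α → Prop) (L : List α) : Prop :=
  ∀ (k : ℕ) (hk : k < L.length), 1 ≤ k → ∃ u ∈ L.take k, r u L[k]

theorem IsConnectedOrder.append_singleton {r : α → α → Prop} {L : List α}
    (hL : IsConnectedOrder r L) {w : α} (hw : L = [] ∨ ∃ u ∈ L, r u w) :
    IsConnectedOrder r (L ++ [w]) := by
  intro k hk hk1
  rw [List.length_append, List.length_singleton] at hk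
  rcases Nat.lt_succ_iff_lt_or_eq.mp hk with hkL | rfl
  · rw [List.take_append_of_le_length hkL.le, List.getElem_append_left hkL]
    exact hL k hkL hk1
  · rw [List.take_left, List.getElem_concat_length rfl]
    rcases hw with rfl | hw
    · simp at hk1
    · exact hw

theorem List.Nodup.getElem_notMem_take {L : List α} (hL : L.Nodup) {k : ℕ} (hk : k < L.length) :
    L[k] ∉ L.take k := by
  rw [List.mem_take_iff_getElem]
  rintro ⟨i, hi, hik⟩
  have := (hL.getElem_inj_iff).mp hik
  omega

theorem Finset.exists_isConnectedOrder [DecidableEq α] {r : α → α → Prop} {S : Finset α}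
    (hS : ∀ x ∈ S, ∀ y ∈ S, Relation.ReflTransGen (fun u w => u ∈ S ∧ w ∈ S ∧ r u w) x y) :
    ∃ L : List α, L.Nodup ∧ L.toFinset = S ∧ IsConnectedOrder r L := by
  have grow : ∀ n ≤ S.card, ∃ L : List α,
      L.Nodup ∧ L.toFinset ⊆ S ∧ L.length = n ∧ IsConnectedOrder r L := by
    intro n
    induction n with
    | zero => exact fun _ => ⟨[], List.nodup_nil, by simp, rfl, fun k hk => by simp at hk⟩
    | succ n ih =>
      intro hn
      obtain ⟨L, hnd, hsub, rfl, hL⟩ := ih (by omega)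
      obtain ⟨y, hyS, hyL⟩ := Finset.exists_mem_notMem_of_card_lt_card
        (s := L.toFinset) (t := S) (by rw [List.toFinset_card_of_nodup hnd]; omega)
      obtain ⟨w, hwS, hwL, hw⟩ : ∃ w ∈ S, w ∉ L ∧ (L = [] ∨ ∃ u ∈ L, r u w) := by
        cases L with
        | nil => exact ⟨y, hyS, by simp, Or.inl rfl⟩
        | cons x L' =>
          obtain ⟨u, w, hu, hw, -, hwS, huw⟩ := (hS x (hsub (by simp)) y hyS).exists_rel_of_not
            (p := (· ∈ x :: L')) (by simp) (by simpa using hyL)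
          exact ⟨w, hwS, hw, Or.inr ⟨u, hu, huw⟩⟩
      refine ⟨L ++ [w], ?_, ?_, by simp, hL.append_singleton hw⟩
      · simpa using hnd.concat hwL
      · simpa [Finset.insert_subset_iff] using ⟨hwS, hsub⟩
  obtain ⟨L, hnd, hsub, hlen, hL⟩ := grow S.card le_rfl
  exact ⟨L, hnd, Finset.eq_of_subset_of_card_le hsub
    (by rw [List.toFinset_card_of_nodup hnd, hlen]), hL⟩

end ConnectedOrder

section QuadraticMonomials

variable {ι : Type*}

theorem Finsupp.tsub_eq_self_of_disjoint {s t : ι →₀ ℕ} (h : Disjoint s.support t.support) :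
    s - t = s := by
  ext v
  by_cases hv : v ∈ s.support
  · simp [Finsupp.notMem_support_iff.mp (Finset.disjoint_left.mp h hv)]
  · simp [Finsupp.notMem_support_iff.mp hv]

theorem Finsupp.support_single_one_add_single_one [DecidableEq ι] (i j : ι) :
    (single i 1 + single j 1 : ι →₀ ℕ).support = {i, j} := by
  rw [support_add_eq_union, support_single _ one_ne_zero,
    support_single _ one_ne_zero, Finset.insert_eq]

theorem Finsupp.single_add_single_tsub_of_ne (i : ι) {j l : ι} (hjl : j ≠ l) :
    (single i 1 + single j 1 : ι →₀ ℕ) - (single i 1 + single l 1) = single j 1 := by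
  classical
  rw [add_tsub_add_eq_tsub_left]
  ext v
  simp only [tsub_apply, single_apply]
  split_ifs with h₁ h₂ <;> first | rfl | exact absurd (h₁.trans h₂.symm) hjl

theorem Finsupp.exists_single_add_single_tsub_eq_single {i j k l : ι}
    (hne : single i 1 + single j 1 ≠ (single k 1 + single l 1 : ι →₀ ℕ))
    (hmeet : ¬ Disjoint (single i 1 + single j 1 : ι →₀ ℕ).support
      (single k 1 + single l 1 : ι →₀ ℕ).support) :
    ∃ w ∈ (single i 1 + single j 1 : ι →₀ ℕ).support,
      (single i 1 + single j 1 : ι →₀ ℕ) - (single k 1 + single l 1) = single w 1 := by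
  classical
  simp only [support_single_one_add_single_one] at hmeet ⊢
  obtain ⟨v, hvij, hvkl⟩ := Finset.not_disjoint_iff.mp hmeet
  simp only [Finset.mem_insert, Finset.mem_singleton] at hvij hvkl
  have shared_first {i j l : ι} (hne : single i 1 + single j 1 ≠ (single i 1 + single l 1 : ι →₀ ℕ)) :
      ∃ w ∈ ({i, j} : Finset ι), (single i 1 + single j 1 : ι →₀ ℕ) - (single i 1 + single l 1) =
        single w 1 :=
    ⟨j, by simp, single_add_single_tsub_of_ne i fun h => hne (h ▸ rfl)⟩
  rcases hvij with rfl | rfl <;> rcases hvkl with rfl | rfl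
  · exact shared_first hne
  · rw [add_comm (single k 1)] at hne ⊢
    exact shared_first hne
  · rw [add_comm (single i 1)] at hne
    rw [add_comm (single i 1), Finset.pair_comm]
    exact shared_first hne
  · rw [add_comm (single i 1), add_comm (single k 1)] at hne
    rw [add_comm (single i 1), add_comm (single k 1), Finset.pair_comm]
    exact shared_first hne

end QuadraticMonomials

section MonomialIdeal

variable {K : Type*} [Field K]

theorem mem_monomialIdeal {B : Finset (ℕ →₀ ℕ)} {f : MvPolynomial ℕ K} :
    f ∈ monomialIdeal K B ↔ ∀ m ∈ f.support, ∃ b ∈ B, b ≤ m := by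
  rw [monomialIdeal, mem_ideal_span_monomial_image]
  simp

theorem colon_monomialIdeal (B : Finset (ℕ →₀ ℕ)) (c : ℕ →₀ ℕ) :
    Submodule.colon (monomialIdeal K B) (Ideal.span {monomial c (1 : K)}) =
      monomialIdeal K (B.image (· - c)) := by
  ext f
  have hsupp : (f * monomial c 1).support = f.support.map (addRightEmbedding c) :=
    AddMonoidAlgebra.support_coeff_mul_single f _ (by simp) _
  rw [Ideal.mem_colon_span_singleton, mem_monomialIdeal, mem_monomialIdeal, hsupp]
  simp only [Finset.mem_map, addRightEmbedding_apply, Finset.mem_image]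
  constructor
  · intro H m hm
    obtain ⟨b, hb, hle⟩ := H (m + c) ⟨m, hm, rfl⟩
    exact ⟨b - c, ⟨b, hb, rfl⟩, tsub_le_iff_right.mpr hle⟩
  · rintro H m ⟨m', hm', rfl⟩
    obtain ⟨_, ⟨b, hb, rfl⟩, hle⟩ := H m' hm'
    exact ⟨b, hb, tsub_le_iff_right.mp hle⟩

theorem colon_monomialIdeal_image_tsub (T : Finset (ℕ →₀ ℕ)) {a s : ℕ →₀ ℕ} (hs : s ≤ a) :
    Submodule.colon (monomialIdeal K (T.image (a - ·))) (Ideal.span {monomial (a - s) (1 : K)}) =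
      monomialIdeal K (T.image (s - ·)) := by
  rw [colon_monomialIdeal, Finset.image_image]
  exact congrArg _ (Finset.image_congr fun t _ => tsub_tsub_tsub_cancel_left hs)

theorem monomialIdeal_eq_span_X {E : Finset (ℕ →₀ ℕ)} {V : Finset ℕ}
    (hV : ∀ v ∈ V, single v 1 ∈ E) (hE : ∀ e ∈ E, ∃ v ∈ V, v ∈ e.support) :
    monomialIdeal K E = Ideal.span ((fun j => (X j : MvPolynomial ℕ K)) '' V) := by
  apply le_antisymm
  · intro f hf
    rw [mem_monomialIdeal] at hf
    rw [mem_ideal_span_X_image]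
    intro m hm
    obtain ⟨e, he, hle⟩ := hf m hm
    obtain ⟨v, hv, hve⟩ := hE e he
    exact ⟨v, hv, (Finsupp.mem_support_iff.mp hve <| Nat.le_zero.mp <| · ▸ hle v)⟩
  · rw [Ideal.span_le]
    rintro _ ⟨v, hv, rfl⟩
    rw [SetLike.mem_coe, mem_monomialIdeal]
    intro m hm
    rw [support_X, Finset.mem_singleton] at hm
    exact ⟨single v 1, hV v hv, hm.ge⟩

theorem exists_card_le_two_monomialIdeal_image_tsub_eq_span_X {s : ℕ →₀ ℕ}
    {T : Finset (ℕ →₀ ℕ)} (hs : ∃ i j, s = single i 1 + single j 1)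
    (hT : ∀ t ∈ T, ∃ k l, t = single k 1 + single l 1) (hsT : s ∉ T)
    (hmeet : ∃ u ∈ T, ¬ Disjoint s.support u.support) :
    ∃ V : Finset ℕ, V.card ≤ 2 ∧
      monomialIdeal K (T.image (s - ·)) =
        Ideal.span ((fun j => (X j : MvPolynomial ℕ K)) '' V) := by
  obtain ⟨i, j, rfl⟩ := hs
  have hvar : ∀ t ∈ T, ¬ Disjoint (single i 1 + single j 1).support t.support →
      ∃ w ∈ (single i 1 + single j 1).support, single i 1 + single j 1 - t = single w 1 := by
    intro t ht hst
    obtain ⟨k, l, rfl⟩ := hT t ht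
    exact exists_single_add_single_tsub_eq_single (fun h => hsT (h ▸ ht)) hst
  obtain ⟨u, hu, hsu⟩ := hmeet
  obtain ⟨w₀, hw₀, hsu⟩ := hvar u hu hsu
  set V := (single i 1 + single j 1).support.filter
    (single · 1 ∈ T.image (single i 1 + single j 1 - ·))
  refine ⟨V, ?_, monomialIdeal_eq_span_X (fun v hv => (Finset.mem_filter.mp hv).2) ?_⟩
  · calc _ ≤ (single i 1 + single j 1).support.card := Finset.card_filter_le _ _
      _ ≤ 2 := by rw [support_single_one_add_single_one]; exact Finset.card_le_two
  · simp only [Finset.forall_mem_image]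
    intro t ht
    by_cases hst : Disjoint (single i 1 + single j 1).support t.support
    · rw [tsub_eq_self_of_disjoint hst]
      exact ⟨w₀, Finset.mem_filter.mpr ⟨hw₀, Finset.mem_image.mpr ⟨u, hu, hsu⟩⟩, hw₀⟩
    · obtain ⟨w, hw, hst⟩ := hvar t ht hst
      exact ⟨w, Finset.mem_filter.mpr ⟨hw, Finset.mem_image.mpr ⟨t, ht, hst⟩⟩, by simp [hst]⟩

end MonomialIdeal

noncomputable def cellMonomial (c : ℕ × ℕ) : ℕ →₀ ℕ :=
  single c.1 1 + single c.2 1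

theorem not_disjoint_support_cellMonomial_of_unitStep {D : Finset (ℕ × ℕ)} {c c' : ℕ × ℕ}
    (h : UnitStep D c c') : ¬ Disjoint (cellMonomial c).support (cellMonomial c').support := by
  rw [cellMonomial, cellMonomial, support_single_one_add_single_one,
    support_single_one_add_single_one, Finset.not_disjoint_iff]
  rcases h with ⟨-, -, ⟨hrow, -⟩ | ⟨hcol, -⟩⟩
  · exact ⟨c.1, by simp, by simp [hrow]⟩
  · exact ⟨c.2, by simp, by simp [hcol]⟩

theorem DiagramConnected.reflTransGen_cellMonomial {D : Finset (ℕ × ℕ)}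
    (hD : DiagramConnected D) : ∀ x ∈ D.image cellMonomial, ∀ y ∈ D.image cellMonomial,
      Relation.ReflTransGen (fun u w => u ∈ D.image cellMonomial ∧ w ∈ D.image cellMonomial ∧
        ¬ Disjoint u.support w.support) x y := by
  simp only [Finset.forall_mem_image]
  intro p hp q hq
  refine Relation.ReflTransGen.lift cellMonomial (fun c c' hcc' => ?_) _ _ (hD p hp q hq)
  exact ⟨Finset.mem_image_of_mem _ hcc'.1, Finset.mem_image_of_mem _ hcc'.2.1,
    not_disjoint_support_cellMonomial_of_unitStep hcc'⟩

theorem dual_shiftedStable_hasLinearQuotients_general (K : Type*) [Field K]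
    (h : ℕ) (lam mu : ℕ → ℕ)
    (hconn : DiagramConnected (quasiFerrersF h lam mu))
    (S : Finset (ℕ →₀ ℕ))
    (hS : S = (quasiFerrersF h lam mu).image fun p => single p.1 1 + single p.2 1)
    (a : ℕ →₀ ℕ) (hdet : ∀ s ∈ S, s ≤ a) :
    ∃ L : List (ℕ →₀ ℕ), L.Nodup ∧ L.toFinset = dualGens a S ∧
      ∀ (k : ℕ) (hk : k < L.length), 1 ≤ k →
        ∃ V : Finset ℕ, V.card ≤ 2 ∧
          Submodule.colon (monomialIdeal K (L.take k).toFinset)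
              (Ideal.span {monomial (L.get ⟨k, hk⟩) (1 : K)}) =
            Ideal.span ((fun j => (X j : MvPolynomial ℕ K)) '' V) := by
  change S = (quasiFerrersF h lam mu).image cellMonomial at hS
  obtain ⟨L, hnd, rfl, hL⟩ := Finset.exists_isConnectedOrder (hS ▸ hconn.reflTransGen_cellMonomial)
  have hpair : ∀ t ∈ L, ∃ i j, t = single i 1 + single j 1 := fun t ht => by
    obtain ⟨c, -, hc⟩ := Finset.mem_image.mp (hS ▸ List.mem_toFinset.mpr ht)
    exact ⟨c.1, c.2, hc.symm⟩
  have hle : ∀ t ∈ L, t ≤ a := fun t ht => hdet t (List.mem_toFinset.mpr ht)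
  refine ⟨L.map (a - ·),
    hnd.map_on fun s hs t ht hst => (tsub_right_inj (hle s hs) (hle t ht)).mp hst,
    by ext; simp [dualGens], fun k hk hk1 => ?_⟩
  rw [List.length_map] at hk
  obtain ⟨u, hu, hmeet⟩ := hL k hk hk1
  have htake : ((L.map (a - ·)).take k).toFinset = (L.take k).toFinset.image (a - ·) := by
    ext; simp [← List.map_take]
  rw [htake, List.get_eq_getElem, List.getElem_map,
    colon_monomialIdeal_image_tsub _ (hle _ (L.getElem_mem hk))]
  exact exists_card_le_two_monomialIdeal_image_tsub_eq_span_X (hpair _ (L.getElem_mem hk))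
    (fun t ht => hpair t (List.mem_of_mem_take (List.mem_toFinset.mp ht)))
    (fun hs => hnd.getElem_notMem_take hk (List.mem_toFinset.mp hs))
    ⟨u, List.mem_toFinset.mpr hu, disjoint_comm.not.mp hmeet⟩

/-- If `I` is a shifted stable ideal of degree 2 (the specialization
`(x_i x_j : (i,j) ∈ D_{λ−μ})` of a connected shifted quasi-Ferrers diagram), and `I` is
`a`-determined, then the `a`-dual of `I` has linear quotients; moreover each colon
ideal in the associated ordering is generated by at most two variables. -/
theorem dual_shiftedStable_hasLinearQuotients (K : Type*) [Field K]
    (h : ℕ) (lam mu : ℕ → ℕ)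
    (hpart : ∀ i, 1 ≤ i → i ≤ h → i - 1 ≤ mu i ∧ mu i < lam i)
    (hconn : DiagramConnected (quasiFerrersF h lam mu))
    (S : Finset (ℕ →₀ ℕ))
    (hS : S = (quasiFerrersF h lam mu).image fun p => single p.1 1 + single p.2 1)
    (a : ℕ →₀ ℕ) (hdet : ∀ s ∈ S, s ≤ a) :
    ∃ L : List (ℕ →₀ ℕ), L.Nodup ∧ L.toFinset = dualGens a S ∧
      ∀ (k : ℕ) (hk : k < L.length), 1 ≤ k →
        ∃ V : Finset ℕ, V.card ≤ 2 ∧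
          Submodule.colon (monomialIdeal K (L.take k).toFinset)
              (Ideal.span {monomial (L.get ⟨k, hk⟩) (1 : K)}) =
            Ideal.span ((fun j => (X j : MvPolynomial ℕ K)) '' V) :=
  dual_shiftedStable_hasLinearQuotients_general K h lam mu hconn S hS a hdet
end

section
/- Let D = D_{λ−μ} be a connected shifted quasi-Ferrers diagram in which all horizontal good moves point westward (equivalently μ_1 ≤ μ_2 ≤ ... ≤ μ_h). Then D is compatible if and only if for all i' < i < j with (i',i) ∈ D and (i,j) ∈ D, one has (i,j−1) ∈ D. -/
/-- The linear order on lattice points coming from the removal procedure; when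
`μ` is nondecreasing (equivalently, all horizontal good moves point westward),
it is the lexicographic order. -/
def lexLT (c c' : ℕ × ℕ) : Prop :=
  c.1 < c'.1 ∨ (c.1 = c'.1 ∧ c.2 < c'.2)

/-- A minimal quasi-Borel move in `D` from `c` to `c'`: an axis-parallel move with
no point of `D` strictly between. -/
def MinMove (D : Finset (ℕ × ℕ)) (c c' : ℕ × ℕ) : Prop :=
  c ∈ D ∧ c' ∈ D ∧ c ≠ c' ∧
    ((c.1 = c'.1 ∧ ∀ b ∈ D, b.1 = c.1 →
        ¬(min c.2 c'.2 < b.2 ∧ b.2 < max c.2 c'.2)) ∨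
     (c.2 = c'.2 ∧ ∀ b ∈ D, b.2 = c.2 →
        ¬(min c.1 c'.1 < b.1 ∧ b.1 < max c.1 c'.1)))

/-- A good move: a minimal quasi-Borel move towards an earlier point. -/
def GoodMove (D : Finset (ℕ × ℕ)) (c c' : ℕ × ℕ) : Prop :=
  MinMove D c c' ∧ lexLT c' c

/-- `X_c`: the set of (indices of) variables `x_b` such that `f_c · x_a / x_b` is an
earlier generator, for some `a ≠ b`; here the generator of the point `c = (i,j)` is
`x_i x_j`, encoded by the multiset `{i, j}`. -/
def Xset (D : Finset (ℕ × ℕ)) (c : ℕ × ℕ) : Set ℕ :=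
  {b | ∃ a, a ≠ b ∧ ∃ c' ∈ D, lexLT c' c ∧
    ({c'.1, c'.2} : Multiset ℕ) + {b} = ({c.1, c.2} : Multiset ℕ) + {a}}


lemma pair_split (x y : ℕ) : ({x,y} : Multiset ℕ) = {x} + {y} := by
  rw [Multiset.insert_eq_cons, ← Multiset.singleton_add]

lemma pair_eq_cases {x y u v : ℕ} (hxy : ({x,y} : Multiset ℕ) = {u,v}) :
    (x = u ∧ y = v) ∨ (x = v ∧ y = u) := by
  rw [Multiset.insert_eq_cons, Multiset.insert_eq_cons, Multiset.cons_eq_cons] at hxy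
  rcases hxy with ⟨rfl, h⟩ | ⟨hne, cs, h1, h2⟩
  · exact Or.inl ⟨rfl, Multiset.singleton_inj.mp h⟩
  · rw [Multiset.singleton_eq_cons_iff] at h1 h2
    exact Or.inr ⟨h2.1.symm, h1.1⟩

lemma mem_D {h : ℕ} {lam mu : ℕ → ℕ} {a b : ℕ} :
    (a, b) ∈ quasiFerrersF h lam mu ↔ 1 ≤ a ∧ a ≤ h ∧ mu a < b ∧ b ≤ lam a := by
  simp only [quasiFerrersF, Finset.mem_filter, Finset.mem_product, Finset.mem_Icc]
  constructor
  · rintro ⟨⟨⟨h1, h2⟩, _, _⟩, h5, h6⟩; exact ⟨h1, h2, h5, h6⟩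
  · rintro ⟨h1, h2, h3, h4⟩
    exact ⟨⟨⟨h1, h2⟩, by omega, le_trans h4 (Finset.le_sup (Finset.mem_Icc.2 ⟨h1, h2⟩))⟩, h3, h4⟩

lemma ncard_two_iff {α : Type*} {S : Set α} {x y : α} (hxy : x ≠ y)
    (hS : S ⊆ {x, y}) : S.ncard = 2 ↔ x ∈ S ∧ y ∈ S := by
  constructor
  · intro h2
    obtain ⟨a, b, hab, rfl⟩ := Set.ncard_eq_two.mp h2
    have ha := hS (by simp : a ∈ ({a, b} : Set α))
    have hb := hS (by simp : b ∈ ({a, b} : Set α))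
    simp only [Set.mem_insert_iff, Set.mem_singleton_iff] at ha hb
    rcases ha with rfl | rfl <;> rcases hb with rfl | rfl <;> simp_all
  · rintro ⟨hx, hy⟩
    have hSeq : S = {x, y} := Set.Subset.antisymm hS (by
      rintro z hz
      rcases hz with rfl | rfl
      · exact hx
      · exact hy)
    rw [hSeq, Set.ncard_pair hxy]

lemma mu_mono {h : ℕ} {mu : ℕ → ℕ} (hmono : ∀ i, 1 ≤ i → i < h → mu i ≤ mu (i + 1)) :
    ∀ a b, 1 ≤ a → a ≤ b → b ≤ h → mu a ≤ mu b := by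
  intro a b h1 hab hbh
  induction b with
  | zero => omega
  | succ n ih =>
    rcases Nat.lt_or_ge a (n + 1) with hlt | hge
    · exact le_trans (ih (by omega) (by omega)) (hmono n (by omega) (by omega))
    · have : a = n + 1 := by omega
      subst this; exact le_rfl

lemma conn_consec {h : ℕ} {lam mu : ℕ → ℕ}
    (hpart : ∀ i, 1 ≤ i → i ≤ h → i - 1 ≤ mu i ∧ mu i < lam i)
    (hconn : DiagramConnected (quasiFerrersF h lam mu))
    {i : ℕ} (h2i : 2 ≤ i) (hih : i ≤ h) : mu i < lam (i - 1) := by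
  set D := quasiFerrersF h lam mu with hD
  have hp : (i - 1, mu (i - 1) + 1) ∈ D := by
    rw [hD, mem_D]
    have := hpart (i - 1) (by omega) (by omega)
    omega
  have hq : (i, mu i + 1) ∈ D := by
    rw [hD, mem_D]
    have := hpart i (by omega) hih
    omega
  have key : ∀ q', Relation.ReflTransGen (UnitStep D) (i - 1, mu (i - 1) + 1) q' →
      i ≤ q'.1 → ∃ jc, (i - 1, jc) ∈ D ∧ (i, jc) ∈ D := by
    intro q' hrtg
    induction hrtg with
    | refl => intro hi; simp at hi; omega
    | @tail b c _ hstep ih =>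
      intro hi
      by_cases hb : i ≤ b.1
      · exact ih hb
      · push_neg at hb
        obtain ⟨hbD, hcD, hor⟩ := hstep
        rcases hor with ⟨hr, _⟩ | ⟨hcol, hrow⟩
        · omega
        · rcases hrow with h1 | h2
          · have hc1 : c.1 = i := by omega
            have hb1 : b.1 = i - 1 := by omega
            refine ⟨b.2, ?_, ?_⟩
            · rw [← hb1, Prod.mk.eta]; exact hbD
            · rw [← hc1, hcol, Prod.mk.eta]; exact hcD
          · omega
  obtain ⟨jc, h1, h2⟩ := key _ (hconn _ hp _ hq) (by simp)
  rw [hD, mem_D] at h1 h2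
  omega

lemma good_count {h : ℕ} {lam mu : ℕ → ℕ}
    (hpart : ∀ i, 1 ≤ i → i ≤ h → i - 1 ≤ mu i ∧ mu i < lam i)
    (hmono : ∀ i, 1 ≤ i → i < h → mu i ≤ mu (i + 1))
    {i j : ℕ} (hc : (i, j) ∈ quasiFerrersF h lam mu) :
    {c' | GoodMove (quasiFerrersF h lam mu) (i, j) c'}.ncard = 2 ↔
      (mu i + 1 < j ∧ ∃ a, 1 ≤ a ∧ a < i ∧ j ≤ lam a) := by
  set D := quasiFerrersF h lam mu with hD
  obtain ⟨hi1, hih, hj1, hj2⟩ := mem_D.mp hc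
  set r0 := Nat.findGreatest (fun a => 1 ≤ a ∧ j ≤ lam a) (i - 1) with hr0
  have hr0le : r0 ≤ i - 1 := Nat.findGreatest_le (P := fun a => 1 ≤ a ∧ j ≤ lam a) (i - 1)
  have hsub : {c' | GoodMove D (i, j) c'} ⊆ {(i, j - 1), (r0, j)} := by
    rintro ⟨x, y⟩ hgm
    obtain ⟨⟨_, hc'D, hne, hcase⟩, hlex⟩ := hgm
    obtain ⟨hx1, hxh, hy1, hy2⟩ := mem_D.mp hc'D
    simp only [lexLT] at hlex
    rcases hcase with ⟨hrow, hgap⟩ | ⟨hcol, hgap⟩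
    · dsimp only at hrow
      subst hrow
      have hyj : y < j := by
        rcases hlex with h' | ⟨-, h'⟩
        · omega
        · exact h'
      have hy : y = j - 1 := by
        by_contra hyne
        have h2' : y < j - 1 := by omega
        exact hgap (i, j - 1) (mem_D.mpr ⟨hi1, hih, by omega, by omega⟩) rfl
          ⟨by dsimp only; omega, by dsimp only; omega⟩
      left
      rw [Prod.mk.injEq]
      exact ⟨rfl, hy⟩
    · dsimp only at hcol
      subst hcol
      have hxi : x < i := by
        rcases hlex with h' | ⟨-, h'⟩
        · exact h'
        · omega
      have hxr : x ≤ r0 := Nat.le_findGreatest (P := fun a => 1 ≤ a ∧ j ≤ lam a) (by omega) ⟨hx1, hy2⟩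
      have hx : x = r0 := by
        by_contra hxne
        have hP : 1 ≤ r0 ∧ j ≤ lam r0 := Nat.findGreatest_spec (P := fun a => 1 ≤ a ∧ j ≤ lam a) (show x ≤ i - 1 by omega) ⟨hx1, hy2⟩
        have hmem : (r0, j) ∈ D := mem_D.mpr ⟨hP.1, by omega,
          lt_of_le_of_lt (mu_mono hmono r0 i hP.1 (by omega) hih) hj1, hP.2⟩
        exact hgap (r0, j) hmem rfl ⟨by dsimp only; omega, by dsimp only; omega⟩
      right
      rw [Set.mem_singleton_iff, Prod.mk.injEq]
      exact ⟨hx, rfl⟩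
  have hne2 : ((i, j - 1) : ℕ × ℕ) ≠ (r0, j) := by
    intro hE; rw [Prod.mk.injEq] at hE; omega
  rw [ncard_two_iff hne2 hsub]
  have hW : (i, j - 1) ∈ {c' | GoodMove D (i, j) c'} ↔ mu i + 1 < j := by
    constructor
    · rintro ⟨⟨-, hmem, -, -⟩, -⟩
      have := mem_D.mp hmem; omega
    · intro hA
      refine ⟨⟨hc, mem_D.mpr ⟨hi1, hih, by omega, by omega⟩, ?_, Or.inl ⟨rfl, ?_⟩⟩,
        Or.inr ⟨rfl, by dsimp only; omega⟩⟩
      · intro hE; rw [Prod.mk.injEq] at hE; omega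
      · rintro b - - ⟨h1', h2'⟩
        dsimp only at h1' h2'
        omega
  have hN : (r0, j) ∈ {c' | GoodMove D (i, j) c'} ↔ ∃ a, 1 ≤ a ∧ a < i ∧ j ≤ lam a := by
    constructor
    · rintro ⟨⟨-, hmem, hne', -⟩, hlex⟩
      have hm := mem_D.mp hmem
      simp only [lexLT] at hlex
      have hri : r0 < i := by
        rcases hlex with h' | ⟨-, h'⟩
        · exact h'
        · omega
      exact ⟨r0, hm.1, hri, hm.2.2.2⟩
    · rintro ⟨a, ha1, hai, haj⟩
      have hP : 1 ≤ r0 ∧ j ≤ lam r0 := Nat.findGreatest_spec (P := fun a => 1 ≤ a ∧ j ≤ lam a) (show a ≤ i - 1 by omega) ⟨ha1, haj⟩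
      have hr0i : r0 < i := by omega
      have hmem : (r0, j) ∈ D := mem_D.mpr ⟨hP.1, by omega,
        lt_of_le_of_lt (mu_mono hmono r0 i hP.1 (by omega) hih) hj1, hP.2⟩
      refine ⟨⟨hc, hmem, ?_, Or.inr ⟨rfl, ?_⟩⟩, Or.inl hr0i⟩
      · intro hE; rw [Prod.mk.injEq] at hE; omega
      · rintro b hbD hb2 ⟨h1', h2'⟩
        dsimp only at h1' h2' hb2
        obtain ⟨hb1', -, -, hbl⟩ := mem_D.mp (show (b.1, b.2) ∈ D from by rwa [Prod.mk.eta])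
        rw [hb2] at hbl
        have : b.1 ≤ r0 := Nat.le_findGreatest (P := fun a => 1 ≤ a ∧ j ≤ lam a) (by omega) ⟨hb1', hbl⟩
        omega
  rw [hW, hN]

lemma xset_count {h : ℕ} {lam mu : ℕ → ℕ}
    (hpart : ∀ i, 1 ≤ i → i ≤ h → i - 1 ≤ mu i ∧ mu i < lam i)
    (hmono : ∀ i, 1 ≤ i → i < h → mu i ≤ mu (i + 1))
    {i j : ℕ} (hc : (i, j) ∈ quasiFerrersF h lam mu) :
    (Xset (quasiFerrersF h lam mu) (i, j)).ncard = 2 ↔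
      (i < j ∧ (∃ a, 1 ≤ a ∧ a < i ∧ j ≤ lam a) ∧
        (mu i + 1 < j ∨ (∃ a, a < i ∧ (a, i) ∈ quasiFerrersF h lam mu) ∨
          ((i, i) ∈ quasiFerrersF h lam mu ∧ i < j))) := by
  set D := quasiFerrersF h lam mu with hD
  obtain ⟨hi1, hih, hj1, hj2⟩ := mem_D.mp hc
  have hijle : i ≤ j := by have := hpart i hi1 hih; omega
  have hsub : Xset D (i, j) ⊆ {i, j} := by
    rintro b ⟨a, hab, c', hc'D, hlex, heq⟩
    have hbmem : b ∈ ({((i, j)).1, ((i, j)).2} : Multiset ℕ) + {a} := by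
      rw [← heq]; simp
    simp only [Multiset.mem_add, Multiset.insert_eq_cons, Multiset.mem_cons,
      Multiset.mem_singleton] at hbmem
    try dsimp only at hbmem
    rcases hbmem with (rfl | rfl) | rfl
    · exact Or.inl rfl
    · exact Or.inr rfl
    · exact absurd rfl hab
  have hmemI : i ∈ Xset D (i, j) ↔ (∃ a, 1 ≤ a ∧ a < i ∧ j ≤ lam a) := by
    constructor
    · rintro ⟨a, hab, ⟨x, y⟩, hc'D, hlex, heq⟩
      try dsimp only at heq
      have heq2 : ({x, y} : Multiset ℕ) = {j, a} := by
        have h' : ({x, y} : Multiset ℕ) + {i} = ({j, a} : Multiset ℕ) + {i} := by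
          rw [heq]; simp only [pair_split]; abel
        exact add_right_cancel h'
      rcases pair_eq_cases heq2 with ⟨rfl, rfl⟩ | ⟨rfl, rfl⟩
      · exfalso
        obtain ⟨ha1, hah, hma, hal⟩ := mem_D.mp hc'D
        have hpj := hpart x ha1 hah
        simp only [lexLT] at hlex
        rcases hlex with h' | ⟨h', h''⟩ <;> omega
      · obtain ⟨ha1, hah, hma, hal⟩ := mem_D.mp hc'D
        simp only [lexLT] at hlex
        have hai : x < i := by rcases hlex with h' | ⟨h', h''⟩ <;> omega
        exact ⟨x, ha1, hai, hal⟩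
    · rintro ⟨a, ha1, hai, haj⟩
      refine ⟨a, by omega, (a, j), mem_D.mpr ⟨ha1, by omega,
        lt_of_le_of_lt (mu_mono hmono a i ha1 (le_of_lt hai) hih) hj1, haj⟩, Or.inl hai, ?_⟩
      try dsimp only
      simp only [pair_split]; abel
  have hmemJ : j ∈ Xset D (i, j) ↔
      (mu i + 1 < j ∨ (∃ a, a < i ∧ (a, i) ∈ D) ∨ ((i, i) ∈ D ∧ i < j)) := by
    constructor
    · rintro ⟨a, hab, ⟨x, y⟩, hc'D, hlex, heq⟩
      try dsimp only at heq
      have heq2 : ({x, y} : Multiset ℕ) = {i, a} := by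
        have h' : ({x, y} : Multiset ℕ) + {j} = ({i, a} : Multiset ℕ) + {j} := by
          rw [heq]; simp only [pair_split]; abel
        exact add_right_cancel h'
      rcases pair_eq_cases heq2 with ⟨rfl, rfl⟩ | ⟨rfl, rfl⟩
      · obtain ⟨-, -, hma, hal⟩ := mem_D.mp hc'D
        simp only [lexLT] at hlex
        have haj : y < j := by rcases hlex with h' | ⟨-, h''⟩ <;> omega
        exact Or.inl (by omega)
      · simp only [lexLT] at hlex
        rcases hlex with h' | ⟨h', h''⟩
        · exact Or.inr (Or.inl ⟨x, h', hc'D⟩)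
        · subst h'
          exact Or.inr (Or.inr ⟨hc'D, h''⟩)
    · rintro (hA | ⟨a, hai, haD⟩ | ⟨hii, hij'⟩)
      · refine ⟨j - 1, by omega, (i, j - 1), mem_D.mpr ⟨hi1, hih, by omega, by omega⟩,
          Or.inr ⟨rfl, by dsimp only; omega⟩, ?_⟩
        try dsimp only
        simp only [pair_split]; abel
      · refine ⟨a, by omega, (a, i), haD, Or.inl hai, ?_⟩
        try dsimp only
        simp only [pair_split]; abel
      · refine ⟨i, by omega, (i, i), hii, Or.inr ⟨rfl, hij'⟩, ?_⟩
        try dsimp only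
        simp only [pair_split]; abel
  by_cases hij2 : i < j
  · rw [ncard_two_iff (show i ≠ j by omega) hsub, hmemI, hmemJ]
    constructor
    · rintro ⟨h1, h2⟩; exact ⟨hij2, h1, h2⟩
    · rintro ⟨-, h1, h2⟩; exact ⟨h1, h2⟩
  · have hsub' : Xset D (i, j) ⊆ {i} := by
      intro b hb
      rcases hsub hb with h' | h'
      · exact h'
      · simp only [Set.mem_singleton_iff] at h' ⊢; omega
    have hle : (Xset D (i, j)).ncard ≤ 1 := by
      have := Set.ncard_le_ncard hsub' (Set.finite_singleton i)
      simpa using this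
    constructor
    · intro h2; omega
    · rintro ⟨h2, -, -⟩; omega

/-- Let `D` be a connected shifted quasi-Ferrers diagram all of whose horizontal good
moves point westward (equivalently, `μ` is nondecreasing).  Then `D` is compatible
(i.e. for every point `c` there are two good moves starting at `c` iff `|X_c| = 2`)
iff for all `i' < i < j` with `(i',i) ∈ D` and `(i,j) ∈ D` one has `(i,j−1) ∈ D`. -/
theorem compatible_iff (h : ℕ) (lam mu : ℕ → ℕ)
    (hpart : ∀ i, 1 ≤ i → i ≤ h → i - 1 ≤ mu i ∧ mu i < lam i)
    (hconn : DiagramConnected (quasiFerrersF h lam mu))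
    (hmono : ∀ i, 1 ≤ i → i < h → mu i ≤ mu (i + 1)) :
    (∀ c ∈ quasiFerrersF h lam mu,
        ({c' | GoodMove (quasiFerrersF h lam mu) c c'}.ncard = 2 ↔
          (Xset (quasiFerrersF h lam mu) c).ncard = 2)) ↔
      (∀ i' i j : ℕ, i' < i → i < j →
        (i', i) ∈ quasiFerrersF h lam mu → (i, j) ∈ quasiFerrersF h lam mu →
        (i, j - 1) ∈ quasiFerrersF h lam mu) := by
  constructor
  · intro hcomp i' i j hi'i hij hD1 hD2
    obtain ⟨hi1, hih, hj1, hj2⟩ := mem_D.mp hD2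
    obtain ⟨hi'1, hi'h, hmi', hli'⟩ := mem_D.mp hD1
    rw [mem_D]
    refine ⟨hi1, hih, ?_, by omega⟩
    by_contra hcon
    have hjeq : j = mu i + 1 := by omega
    have hi2 : 2 ≤ i := by omega
    have hlam : mu i < lam (i - 1) := conn_consec hpart hconn hi2 hih
    have hB : ∃ a, 1 ≤ a ∧ a < i ∧ j ≤ lam a := ⟨i - 1, by omega, by omega, by omega⟩
    have hX : (Xset (quasiFerrersF h lam mu) (i, j)).ncard = 2 :=
      (xset_count hpart hmono hD2).mpr ⟨hij, hB, Or.inr (Or.inl ⟨i', hi'i, hD1⟩)⟩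
    have hG := (hcomp (i, j) hD2).mpr hX
    have hA := ((good_count hpart hmono hD2).mp hG).1
    omega
  · intro hR c hc
    obtain ⟨i, j⟩ := c
    obtain ⟨hi1, hih, hj1, hj2⟩ := mem_D.mp hc
    rw [good_count hpart hmono hc, xset_count hpart hmono hc]
    have hpi := hpart i hi1 hih
    constructor
    · rintro ⟨hA, hB⟩
      exact ⟨by omega, hB, Or.inl hA⟩
    · rintro ⟨hij, hB, (hA | ⟨a, hai, haD⟩ | ⟨hii, hij'⟩)⟩
      · exact ⟨hA, hB⟩
      · have := mem_D.mp (hR a i j hai hij haD hc)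
        exact ⟨by omega, hB⟩
      · have := mem_D.mp hii
        exact ⟨by omega, hB⟩
end
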